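/- Let H and G be finite simple graphs and let α ≥ β be integers. If H is a minor of G, then αprune(H) is a minor of βprune(G). -/

import Mathlib

/-!
Take an inclusion-minimal model `ψ` of `αprune(H)` in `G`, with vertex set `U = ⋃ ψ`; it suffices
that `G[U]` is `α`-robust, for then it is `β`-robust and `U ⊆ βprune(G)`. As a union of `α`-robust
induced subgraphs, `αprune(H)` is itself `α`-robust. Let `x ∈ ψ v` and let `C` be a component of
`G[U - x]`. If `C` meets a branch set `ψ u` with `u ≠ v`, it swallows the branch sets of the whole
component of `u` in `αprune(H) - v`, which has at least `α - 1` vertices. Otherwise `C ⊆ ψ v`, no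
edge leaves `C` except towards `x`, and removing `C` from `ψ v` leaves a model, against minimality.
-/

/-- An `H`-model in `G`: branch sets `φ v ⊆ V(G)` inducing connected subgraphs,
pairwise disjoint, with an edge of `G` between the branch sets of adjacent vertices of `H`. -/
def IsMinorModel {V W : Type*} (G : SimpleGraph V) (H : SimpleGraph W)
    (φ : W → Set V) : Prop :=
  (∀ v : W, (G.induce (φ v)).Connected) ∧
  (∀ u v : W, H.Adj u v → ∃ u' ∈ φ u, ∃ v' ∈ φ v, G.Adj u' v') ∧
  (∀ u v : W, u ≠ v → Disjoint (φ u) (φ v))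

/-- `H` is a minor of `G` (`H ⪯ G`) if an `H`-model in `G` exists. -/
def IsMinorOf {V W : Type*} (H : SimpleGraph W) (G : SimpleGraph V) : Prop :=
  ∃ φ : W → Set V, IsMinorModel G H φ

/-- A graph is `α`-robust when it has at least `α` vertices and no vertex `v` exists
such that deleting `v` leaves a connected component with fewer than `α - 1` vertices. -/
def IsRobustGraph {V : Type*} (G : SimpleGraph V) (α : ℤ) : Prop :=
  α ≤ ((Set.univ : Set V).ncard : ℤ) ∧
  ∀ v : V, ∀ C : (G.induce {u | u ≠ v}).ConnectedComponent,
    α - 1 ≤ (C.supp.ncard : ℤ)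

/-- The vertex set of `αprune(G)`: the union of all vertex sets `A` for which
`G[A]` is `α`-robust. -/
def pruneSet {V : Type*} (G : SimpleGraph V) (α : ℤ) : Set V :=
  {v | ∃ A : Set V, IsRobustGraph (G.induce A) α ∧ v ∈ A}

/-- `αprune(G)`: the unique maximal `α`-robust subgraph of `G` (empty if none exists). -/
def prune {V : Type*} (G : SimpleGraph V) (α : ℤ) : SimpleGraph (pruneSet G α) :=
  G.induce (pruneSet G α)

open Function Relation Set SimpleGraph

section

variable {V W : Type*}

namespace SimpleGraph

def ReachableIn (G : SimpleGraph V) (S : Set V) : V → V → Prop :=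
  ReflTransGen fun x y => x ∈ S ∧ y ∈ S ∧ G.Adj x y

/-- The component of `w` in `G[S]` as a set of vertices of `G`; it contains `w` even if `w ∉ S`. -/
def compIn (G : SimpleGraph V) (S : Set V) (w : V) : Set V :=
  {u | G.ReachableIn S w u}

section ReachableIn

variable {G : SimpleGraph V} {S T : Set V} {w x y : V}

lemma ReachableIn.mono (hST : S ⊆ T) (h : G.ReachableIn S x y) : G.ReachableIn T x y :=
  ReflTransGen.mono (fun _ _ ⟨ha, hb, hab⟩ => ⟨hST ha, hST hb, hab⟩) _ _ h

lemma ReachableIn.symm (h : G.ReachableIn S x y) : G.ReachableIn S y x := by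
  induction h with
  | refl => exact .refl
  | tail _ hstep ih => exact ih.head ⟨hstep.2.1, hstep.1, hstep.2.2.symm⟩

lemma ReachableIn.eq_or_mem (h : G.ReachableIn S x y) : y = x ∨ y ∈ S := by
  rcases h.cases_tail with rfl | ⟨_, _, _, hy, _⟩
  exacts [.inl rfl, .inr hy]

lemma reachableIn_univ : G.ReachableIn univ = G.Reachable := by
  ext x y
  simp [ReachableIn, reachable_iff_reflTransGen]

lemma reachableIn_induce_iff {Q : Set V} {T : Set Q} {a b : Q} :
    (G.induce Q).ReachableIn T a b ↔ G.ReachableIn (Subtype.val '' T) a b := by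
  refine ⟨fun h => h.lift _ fun x y ⟨hx, hy, hxy⟩ => ⟨mem_image_of_mem _ hx,
    mem_image_of_mem _ hy, hxy⟩, fun h => ?_⟩
  suffices ∀ y, G.ReachableIn (Subtype.val '' T) a y → ∀ hy : y ∈ Q,
      (G.induce Q).ReachableIn T a ⟨y, hy⟩ from this b h b.2
  intro y hy
  induction hy with
  | refl => exact fun _ => .refl
  | tail _ hstep ih =>
    obtain ⟨⟨c, hc, rfl⟩, ⟨d, hd, rfl⟩, hcd⟩ := hstep
    exact fun _ => (ih c.2).tail ⟨hc, hd, hcd⟩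

lemma reachable_induce_iff {a b : S} : (G.induce S).Reachable a b ↔ G.ReachableIn S a b := by
  rw [← reachableIn_univ, reachableIn_induce_iff, image_univ, Subtype.range_coe]

lemma connected_induce_iff_reachableIn :
    (G.induce S).Connected ↔ S.Nonempty ∧ ∀ a ∈ S, ∀ b ∈ S, G.ReachableIn S a b := by
  simp only [connected_iff, Preconnected, reachable_induce_iff, Subtype.forall,
    nonempty_coe_sort, and_comm]

lemma mem_compIn_self : w ∈ G.compIn S w := ReflTransGen.refl

lemma compIn_mono (hST : S ⊆ T) : G.compIn S w ⊆ G.compIn T w := fun _ hu => hu.mono hST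

lemma compIn_subset (hw : w ∈ S) : G.compIn S w ⊆ S := fun _ hu =>
  hu.eq_or_mem.elim (· ▸ hw) id

lemma mem_compIn_of_adj (hw : w ∈ S) (hx : x ∈ G.compIn S w) (hy : y ∈ S) (hxy : G.Adj x y) :
    y ∈ G.compIn S w :=
  ReflTransGen.tail hx ⟨compIn_subset hw hx, hy, hxy⟩

lemma compIn_sdiff_singleton (hx : x ∉ G.compIn S w) : G.compIn (S \ {x}) w = G.compIn S w := by
  refine (compIn_mono sdiff_subset).antisymm fun y hy => ?_
  induction hy with
  | refl => exact mem_compIn_self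
  | @tail c d hc hstep ih =>
    have hcx : c ≠ x := fun h => hx (h ▸ hc)
    have hdx : d ≠ x := fun h => hx (h ▸ hc.tail hstep)
    exact ih.tail ⟨⟨hstep.1, hcx⟩, ⟨hstep.2.1, hdx⟩, hstep.2.2⟩

lemma subset_compIn_of_connected {X : Set V} (hX : (G.induce X).Connected) (hXS : X ⊆ S)
    (hmeet : (X ∩ G.compIn S w).Nonempty) : X ⊆ G.compIn S w := by
  obtain ⟨y, hyX, hy⟩ := hmeet
  exact fun z hz => ReflTransGen.trans hy
    (((connected_induce_iff_reachableIn.1 hX).2 y hyX z hz).mono hXS)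

lemma image_val_compIn_induce {Q : Set V} {T : Set Q} {w : Q} :
    Subtype.val '' (G.induce Q).compIn T w = G.compIn (Subtype.val '' T) w := by
  ext u
  refine ⟨fun ⟨y, hy, hyu⟩ => hyu ▸ reachableIn_induce_iff.1 hy, fun hu => ?_⟩
  have huQ : u ∈ Q := by
    rcases hu.eq_or_mem with rfl | ⟨y, -, rfl⟩
    exacts [w.2, y.2]
  exact ⟨⟨u, huQ⟩, reachableIn_induce_iff.2 hu, rfl⟩

lemma ncard_compIn_induce {Q : Set V} {T : Set Q} {w : Q} :
    ((G.induce Q).compIn T w).ncard = (G.compIn (Subtype.val '' T) w).ncard := by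
  rw [← image_val_compIn_induce, ncard_image_of_injective _ Subtype.val_injective]

lemma supp_connectedComponentMk (w : V) : (G.connectedComponentMk w).supp = G.compIn univ w := by
  ext u
  simp [compIn, reachableIn_univ, ConnectedComponent.eq, reachable_comm]

/-- Walks from `X \ C` to `x` never need to enter `C`. -/
lemma connected_induce_sdiff {X C : Set V} (hX : (G.induce X).Connected) (hxX : x ∈ X)
    (hxC : x ∉ C) (hC : ∀ c ∈ C, ∀ d ∈ X, d ≠ x → G.Adj c d → d ∈ C) :
    (G.induce (X \ C)).Connected := by
  rw [connected_induce_iff_reachableIn] at hX ⊢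
  have hto : ∀ a ∈ X \ C, G.ReachableIn (X \ C) a x := by
    intro a ha
    induction hX.2 a ha.1 x hxX using ReflTransGen.head_induction_on with
    | refl => exact .refl
    | @head a c hstep _ ih =>
      by_cases hcC : c ∈ C
      · obtain rfl : a = x := by_contra fun hax => ha.2 (hC c hcC a hstep.1 hax hstep.2.2.symm)
        exact .refl
      · exact (ih ⟨hstep.2.1, hcC⟩).head ⟨ha, ⟨hstep.2.1, hcC⟩, hstep.2.2⟩
  exact ⟨⟨x, hxX, hxC⟩, fun a ha b hb => (hto a ha).trans (hto b hb).symm⟩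

end ReachableIn

section Robust

variable {G : SimpleGraph V} {α β : ℤ}

lemma isRobustGraph_iff : IsRobustGraph G α ↔
    α ≤ Nat.card V ∧ ∀ v w, w ≠ v → α - 1 ≤ (G.compIn {v}ᶜ w).ncard := by
  have hsupp (v : V) (w : {u | u ≠ v}) :
      (((G.induce {u | u ≠ v}).connectedComponentMk w).supp.ncard : ℤ) =
        (G.compIn {v}ᶜ w).ncard := by
    rw [supp_connectedComponentMk, ncard_compIn_induce, image_univ, Subtype.range_coe]
    rfl
  refine and_congr (by rw [ncard_univ]) ⟨fun h v w hwv => ?_, fun h v C => ?_⟩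
  · simpa [hsupp] using h v ((G.induce _).connectedComponentMk ⟨w, hwv⟩)
  · refine C.ind fun w => ?_
    rw [hsupp]
    exact h v w w.2

lemma isRobustGraph_induce_iff {A : Set V} : IsRobustGraph (G.induce A) α ↔
    α ≤ A.ncard ∧ ∀ v ∈ A, ∀ w ∈ A, w ≠ v → α - 1 ≤ (G.compIn (A \ {v}) w).ncard := by
  simp only [isRobustGraph_iff, ncard_compIn_induce, Subtype.forall, ne_eq, Subtype.mk.injEq,
    image_val_compl, image_singleton, Nat.card_coe_set_eq]

lemma IsRobustGraph.anti (h : IsRobustGraph G α) (hβα : β ≤ α) : IsRobustGraph G β :=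
  ⟨hβα.trans h.1, fun v C => by linarith [h.2 v C]⟩

/-- For `v ∉ A`, the component of `w` in `G[A]` is either all of `A` or avoids some `u ∈ A`, and
is then also the component of `w` in `G[A \ {u}]`. -/
lemma IsRobustGraph.le_ncard_compIn [Finite V] {A : Set V} {v w : V}
    (hA : IsRobustGraph (G.induce A) α) (hwA : w ∈ A) (hwv : w ≠ v) :
    α - 1 ≤ (G.compIn (A \ {v}) w).ncard := by
  rw [isRobustGraph_induce_iff] at hA
  by_cases hvA : v ∈ A
  · exact hA.2 v hvA w hwA hwv
  rw [sdiff_singleton_eq_self hvA]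
  by_cases hall : A ⊆ G.compIn A w
  · linarith [hA.1, (Int.ofNat_le.2 (ncard_le_ncard hall) : (A.ncard : ℤ) ≤ _)]
  obtain ⟨u, huA, hu⟩ := not_subset.1 hall
  have hwu : w ≠ u := fun h => hu (h ▸ mem_compIn_self)
  simpa [compIn_sdiff_singleton hu] using hA.2 u huA w hwA hwu

lemma subset_pruneSet {A : Set V} (hA : IsRobustGraph (G.induce A) α) : A ⊆ pruneSet G α :=
  fun _ hv => ⟨A, hA, hv⟩

lemma isRobustGraph_prune [Finite V] {A : Set V} (hA : IsRobustGraph (G.induce A) α) :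
    IsRobustGraph (prune G α) α := by
  refine isRobustGraph_induce_iff.2 ⟨?_, fun v _ w hw hwv => ?_⟩
  · exact hA.1.trans (by simpa using ncard_le_ncard (subset_pruneSet hA))
  · obtain ⟨B, hB, hwB⟩ := hw
    have hBP : B \ {v} ⊆ pruneSet G α \ {v} := sdiff_subset_sdiff_left (subset_pruneSet hB)
    exact (IsRobustGraph.le_ncard_compIn hB hwB hwv).trans
      (by exact_mod_cast ncard_le_ncard (compIn_mono hBP))

end Robust

end SimpleGraph

lemma isMinorOf_of_isEmpty [IsEmpty W] (H : SimpleGraph W) (G : SimpleGraph V) : IsMinorOf H G :=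
  ⟨isEmptyElim, isEmptyElim, isEmptyElim, isEmptyElim⟩

namespace IsMinorModel

variable {G : SimpleGraph V} {H : SimpleGraph W} {ψ : W → Set V}

lemma nonempty (hψ : IsMinorModel G H ψ) (v : W) : (ψ v).Nonempty :=
  nonempty_coe_sort.1 (hψ.1 v).nonempty

lemma comp_val (hψ : IsMinorModel G H ψ) (P : Set W) :
    IsMinorModel G (H.induce P) (ψ ∘ Subtype.val) :=
  ⟨fun v => hψ.1 v, fun u v huv => hψ.2.1 u v huv,
    fun u v huv => hψ.2.2 u v (Subtype.val_injective.ne huv)⟩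

lemma induce {S : Set V} (hψ : IsMinorModel G H ψ) (hS : ∀ v, ψ v ⊆ S) :
    IsMinorModel (G.induce S) H fun v => Subtype.val ⁻¹' ψ v := by
  refine ⟨fun v => ?_, fun u v huv => ?_, fun u v huv => (hψ.2.2 u v huv).preimage _⟩
  · rw [connected_induce_iff_reachableIn]
    obtain ⟨y, hy⟩ := hψ.nonempty v
    refine ⟨⟨⟨y, hS v hy⟩, hy⟩, fun a ha b hb => ?_⟩
    rw [reachableIn_induce_iff, image_preimage_eq_of_subset (by simpa using hS v)]
    exact (connected_induce_iff_reachableIn.1 (hψ.1 v)).2 a ha b hb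
  · obtain ⟨a, ha, b, hb, hab⟩ := hψ.2.1 u v huv
    exact ⟨⟨a, hS u ha⟩, ha, ⟨b, hS v hb⟩, hb, hab⟩

lemma ncard_le_ncard_biUnion [Finite V] (hψ : IsMinorModel G H ψ) (T : Set W) :
    T.ncard ≤ (⋃ u ∈ T, ψ u).ncard := by
  choose f hf using hψ.nonempty
  have hinj : Injective f := fun u v huv => by_contra fun hne =>
    disjoint_left.1 (hψ.2.2 u v hne) (hf u) (huv ▸ hf v)
  rw [← ncard_image_of_injective T hinj]
  exact ncard_le_ncard (image_subset_iff.2 fun u hu => mem_biUnion hu (hf u))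

lemma update_sdiff [DecidableEq W] {v : W} {C : Set V} (hψ : IsMinorModel G H ψ)
    (hconn : (G.induce (ψ v \ C)).Connected) (hC : ∀ c ∈ C, ∀ u ≠ v, ∀ b ∈ ψ u, ¬ G.Adj c b) :
    IsMinorModel G H (update ψ v (ψ v \ C)) := by
  have hsub (u : W) : update ψ v (ψ v \ C) u ⊆ ψ u := by
    rcases eq_or_ne u v with rfl | huv
    · simp
    · simp [huv]
  have hmem {u : W} {a : V} (ha : a ∈ ψ u) (haC : u = v → a ∉ C) :
      a ∈ update ψ v (ψ v \ C) u := by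
    rcases eq_or_ne u v with rfl | huv
    · simpa using ⟨ha, haC rfl⟩
    · simpa [huv] using ha
  refine ⟨fun u => ?_, fun u u' huu' => ?_,
    fun u u' hne => (hψ.2.2 u u' hne).mono (hsub u) (hsub u')⟩
  · rcases eq_or_ne u v with rfl | huv
    · rwa [update_self]
    · rw [update_of_ne huv]
      exact hψ.1 u
  · obtain ⟨a, ha, b, hb, hab⟩ := hψ.2.1 u u' huu'
    refine ⟨a, hmem ha fun huv haC => ?_, b, hmem hb fun huv hbC => ?_, hab⟩
    · exact hC a haC u' (huv ▸ huu'.ne.symm) b hb hab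
    · exact hC b hbC u (huv ▸ huu'.ne) a ha hab.symm

lemma subset_compIn_of_reachableIn {R : Set W} {S : Set V} {u₀ u : W} {w : V}
    (hψ : IsMinorModel G H ψ) (hRS : ∀ u ∈ R, ψ u ⊆ S) (hw : w ∈ S) (hu₀ : u₀ ∈ R)
    (hmeet : (ψ u₀ ∩ G.compIn S w).Nonempty) (hu : H.ReachableIn R u₀ u) :
    ψ u ⊆ G.compIn S w := by
  induction hu with
  | refl => exact subset_compIn_of_connected (hψ.1 u₀) (hRS u₀ hu₀) hmeet
  | @tail y z _ hstep ih =>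
    obtain ⟨a, ha, b, hb, hab⟩ := hψ.2.1 y z hstep.2.2
    exact subset_compIn_of_connected (hψ.1 z) (hRS z hstep.2.1)
      ⟨b, hb, mem_compIn_of_adj hw (ih ha) (hRS z hstep.2.1 hb) hab⟩

end IsMinorModel

lemma IsMinorOf.induce {G : SimpleGraph V} {H : SimpleGraph W} (h : IsMinorOf H G) (P : Set W) :
    IsMinorOf (H.induce P) G :=
  let ⟨_, hψ⟩ := h
  ⟨_, hψ.comp_val P⟩

theorem IsMinorModel.isRobustGraph_induce_iUnion [Finite V] {G : SimpleGraph V}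
    {H : SimpleGraph W} {ψ : W → Set V} {α : ℤ} (hH : IsRobustGraph H α)
    (hψ : IsMinorModel G H ψ)
    (hmin : ∀ ψ', IsMinorModel G H ψ' → ⋃ v, ψ' v ⊆ ⋃ v, ψ v → ⋃ v, ψ v ⊆ ⋃ v, ψ' v) :
    IsRobustGraph (G.induce (⋃ v, ψ v)) α := by
  classical
  set U := ⋃ v, ψ v
  have hsubU : ∀ v, ψ v ⊆ U := subset_iUnion ψ
  rw [isRobustGraph_iff] at hH
  refine isRobustGraph_induce_iff.2 ⟨?_, fun x hx w hw hwx => ?_⟩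
  · have := hψ.ncard_le_ncard_biUnion univ
    simp only [ncard_univ, mem_univ, iUnion_true] at this
    exact hH.1.trans (by exact_mod_cast this)
  obtain ⟨v, hxv⟩ := mem_iUnion.1 hx
  set C := G.compIn (U \ {x}) w
  have hwS : w ∈ U \ {x} := ⟨hw, hwx⟩
  have hother : ∀ u ∈ ({v}ᶜ : Set W), ψ u ⊆ U \ {x} := fun u hu y hy =>
    ⟨hsubU u hy, fun hyx => disjoint_left.1 (hψ.2.2 u v hu) hy (hyx ▸ hxv)⟩
  by_cases hmeet : ∃ u ≠ v, (ψ u ∩ C).Nonempty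
  · obtain ⟨u, huv, hmeet⟩ := hmeet
    have hswallow : ⋃ u' ∈ H.compIn {v}ᶜ u, ψ u' ⊆ C := iUnion₂_subset fun _ hu' =>
      hψ.subset_compIn_of_reachableIn hother hwS huv hmeet hu'
    calc α - 1 ≤ (H.compIn {v}ᶜ u).ncard := hH.2 v u huv
      _ ≤ (⋃ u' ∈ H.compIn {v}ᶜ u, ψ u').ncard := by
        exact_mod_cast hψ.ncard_le_ncard_biUnion _
      _ ≤ C.ncard := by exact_mod_cast ncard_le_ncard hswallow
  push Not at hmeet
  have hnoedge : ∀ c ∈ C, ∀ u ≠ v, ∀ b ∈ ψ u, ¬ G.Adj c b := fun c hc u hu b hb hcb =>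
    (hmeet u hu).subset ⟨hb, mem_compIn_of_adj hwS hc (hother u hu hb) hcb⟩
  have hconn : (G.induce (ψ v \ C)).Connected :=
    connected_induce_sdiff (hψ.1 v) hxv (fun hxC => (compIn_subset hwS hxC).2 rfl)
      fun c hc d hd hdx hcd => mem_compIn_of_adj hwS hc ⟨hsubU v hd, hdx⟩ hcd
  have hcut : ⋃ u, update ψ v (ψ v \ C) u ⊆ U \ {w} := by
    refine iUnion_subset fun u y hy => ?_
    rcases eq_or_ne u v with rfl | huv
    · rw [update_self] at hy
      exact ⟨hsubU u hy.1, fun hyw => hy.2 (hyw ▸ mem_compIn_self)⟩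
    · rw [update_of_ne huv] at hy
      exact ⟨hsubU u hy, fun hyw => (hmeet u huv).subset ⟨hy, hyw ▸ mem_compIn_self⟩⟩
  exact ((hcut (hmin _ (hψ.update_sdiff hconn hnoedge) (hcut.trans sdiff_subset) hw)).2 rfl).elim

lemma IsMinorOf.exists_minimal_model [Finite V] {G : SimpleGraph V} {H : SimpleGraph W}
    (h : IsMinorOf H G) : ∃ ψ, IsMinorModel G H ψ ∧
      ∀ ψ', IsMinorModel G H ψ' → ⋃ v, ψ' v ⊆ ⋃ v, ψ v → ⋃ v, ψ v ⊆ ⋃ v, ψ' v := by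
  obtain ⟨φ, hφ⟩ := h
  obtain ⟨_, ⟨ψ, hψ, rfl⟩, hmin⟩ :=
    (toFinite {U | ∃ ψ, IsMinorModel G H ψ ∧ ⋃ v, ψ v = U}).exists_minimal ⟨_, φ, hφ, rfl⟩
  exact ⟨ψ, hψ, fun ψ' hψ' hsub => hmin ⟨ψ', hψ', rfl⟩ hsub⟩

end

/-- For `α ≥ β`, if `H` is a minor of `G` then `αprune(H)` is a minor of `βprune(G)`. -/
theorem stmt_8 {V W : Type*} [Fintype V] [Fintype W]
    (H : SimpleGraph W) (G : SimpleGraph V) (α β : ℤ) (hαβ : β ≤ α)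
    (h : IsMinorOf H G) :
    IsMinorOf (prune H α) (prune G β) := by
  rcases isEmpty_or_nonempty (pruneSet H α) with _ | ⟨_, A, hA, -⟩
  · exact isMinorOf_of_isEmpty _ _
  obtain ⟨ψ, hψ, hmin⟩ := (h.induce (pruneSet H α)).exists_minimal_model
  have hU : IsRobustGraph (G.induce (⋃ v, ψ v)) β :=
    (hψ.isRobustGraph_induce_iUnion (isRobustGraph_prune hA) hmin).anti hαβ
  exact ⟨_, hψ.induce fun v => (subset_iUnion ψ v).trans (subset_pruneSet hU)⟩
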